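/- Let G be a chordal graph on the vertex set [n], and let F_1,...,F_m be the facets of the clique complex Δ(G) which admit a free vertex. If [n] is the disjoint union of F_1,...,F_m, then G is unmixed; more precisely, a subset X ⊆ [n] is a minimal vertex cover of G only if |X ∩ F_i| = |F_i| − 1 for all i, so every minimal vertex cover has cardinality n − m. -/

import Mathlib

set_option maxHeartbeats 1000000
set_option synthInstance.maxHeartbeats 400000

open MvPolynomial

/-- A simple graph is chordal if every cycle of length > 3 has a chord, i.e. an edge of the
graph joining two vertices of the cycle which is not an edge of the cycle. -/
def SimpleGraph.IsChordal {V : Type*} (G : SimpleGraph V) : Prop :=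
  ∀ (v : V) (c : G.Walk v v), c.IsCycle → 3 < c.length →
    ∃ u w, u ∈ c.support ∧ w ∈ c.support ∧ G.Adj u w ∧ s(u, w) ∉ c.edges

/-- `F` is a facet of the clique complex `Δ(G)`, i.e. a maximal clique of `G`. -/
def SimpleGraph.IsFacet {V : Type*} (G : SimpleGraph V) (F : Finset V) : Prop :=
  G.IsClique (F : Set V) ∧ ∀ F' : Finset V, G.IsClique (F' : Set V) → F ⊆ F' → F' = F

/-- `v` is a free vertex of the facet `F` of `Δ(G)`: it belongs to no other facet. -/
def SimpleGraph.IsFreeVertex {V : Type*} (G : SimpleGraph V) (F : Finset V) (v : V) : Prop :=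
  v ∈ F ∧ ∀ F' : Finset V, G.IsFacet F' → v ∈ F' → F' = F

/-- `F` is a facet of `Δ(G)` admitting a free vertex. -/
def SimpleGraph.IsFreeFacet {V : Type*} (G : SimpleGraph V) (F : Finset V) : Prop :=
  G.IsFacet F ∧ ∃ v, G.IsFreeVertex F v

/-- A vertex cover of `G`: a set of vertices meeting every edge. -/
def SimpleGraph.IsFinsetVertexCover {V : Type*} (G : SimpleGraph V) (C : Finset V) : Prop :=
  ∀ u w, G.Adj u w → u ∈ C ∨ w ∈ C

/-- A minimal vertex cover of `G`: no proper subset is a vertex cover. -/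
def SimpleGraph.IsMinVertexCover {V : Type*} (G : SimpleGraph V) (C : Finset V) : Prop :=
  G.IsFinsetVertexCover C ∧ ∀ C' ⊆ C, G.IsFinsetVertexCover C' → C' = C

/-- `G` is unmixed: all minimal vertex covers of `G` have the same cardinality. -/
def SimpleGraph.Unmixed {V : Type*} (G : SimpleGraph V) : Prop :=
  ∀ C C' : Finset V, G.IsMinVertexCover C → G.IsMinVertexCover C' → C.card = C'.card

/-!
A free vertex `v` of a facet `F` has all its neighbours in `F`, since every edge lies in some
facet and `F` is the only facet containing `v`. Hence a minimal vertex cover `X` cannot contain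
all of `F`: otherwise `X \ {v}` would still be a cover. As `F` is a clique, `X` misses at most
one vertex of `F`, so `|X ∩ F| = |F| - 1`. Summing over the partition of the vertex set by the
free facets gives `|X| = n - m`.
-/

namespace SimpleGraph

variable {V : Type*} {G : SimpleGraph V}

theorem exists_isFacet_superset [Finite V] {s : Finset V} (hs : G.IsClique (s : Set V)) :
    ∃ F, G.IsFacet F ∧ s ⊆ F := by
  classical
  have := Fintype.ofFinite V
  obtain ⟨F, hF, hmax⟩ := Finset.exists_max_image
    {t : Finset V | G.IsClique (t : Set V) ∧ s ⊆ t} Finset.card ⟨s, by simp [hs]⟩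
  simp only [Finset.mem_filter, Finset.mem_univ, true_and] at hF hmax
  refine ⟨F, ⟨hF.1, fun F' hF' hsub => ?_⟩, hF.2⟩
  exact (Finset.eq_of_subset_of_card_le hsub (hmax F' ⟨hF', hF.2.trans hsub⟩)).symm

theorem IsFreeVertex.mem_of_adj [Finite V] {F : Finset V} {v w : V} (hv : G.IsFreeVertex F v)
    (hvw : G.Adj v w) : w ∈ F := by
  classical
  have hedge : G.IsClique ((({v, w} : Finset V)) : Set V) := by
    rw [Finset.coe_pair]
    exact isClique_pair.mpr fun _ => hvw
  obtain ⟨F', hF', hsub⟩ := exists_isFacet_superset hedge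
  rw [← hv.2 F' hF' (hsub (by simp))]
  exact hsub (by simp)

theorem IsFinsetVertexCover.erase [DecidableEq V] {C : Finset V} (hC : G.IsFinsetVertexCover C)
    {v : V} (hN : ∀ w, G.Adj v w → w ∈ C) : G.IsFinsetVertexCover (C.erase v) := by
  intro u w huw
  by_cases hu : u = v
  · subst hu
    exact Or.inr (Finset.mem_erase.mpr ⟨huw.ne', hN w huw⟩)
  by_cases hw : w = v
  · subst hw
    exact Or.inl (Finset.mem_erase.mpr ⟨huw.ne, hN u huw.symm⟩)
  exact (hC u w huw).imp (Finset.mem_erase.mpr ⟨hu, ·⟩) (Finset.mem_erase.mpr ⟨hw, ·⟩)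

theorem IsMinVertexCover.not_subset_of_isFreeVertex [Finite V] {X F : Finset V} {v : V}
    (hX : G.IsMinVertexCover X) (hv : G.IsFreeVertex F v) : ¬F ⊆ X := by
  classical
  intro hFX
  have hcover : G.IsFinsetVertexCover (X.erase v) :=
    hX.1.erase fun w hvw => hFX (hv.mem_of_adj hvw)
  have hvX : v ∈ X.erase v := by
    rw [hX.2 _ (X.erase_subset v) hcover]
    exact hFX hv.1
  exact X.notMem_erase v hvX

theorem IsFinsetVertexCover.card_sdiff_le_one [DecidableEq V] {C K : Finset V}
    (hC : G.IsFinsetVertexCover C) (hK : G.IsClique (K : Set V)) : (K \ C).card ≤ 1 := by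
  rw [Finset.card_le_one]
  intro a ha b hb
  by_contra hab
  simp only [Finset.mem_sdiff] at ha hb
  exact (hC a b (hK ha.1 hb.1 hab)).elim ha.2 hb.2

theorem IsMinVertexCover.card_inter_of_isFreeFacet [Finite V] [DecidableEq V] {X F : Finset V}
    (hX : G.IsMinVertexCover X) (hF : G.IsFreeFacet F) : (X ∩ F).card = F.card - 1 := by
  obtain ⟨hfacet, v, hv⟩ := hF
  have hmissed : (F \ X).card = 1 :=
    le_antisymm (hX.1.card_sdiff_le_one hfacet.1)
      (Finset.card_pos.mpr (Finset.sdiff_nonempty.mpr (hX.not_subset_of_isFreeVertex hv)))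
  have := Finset.card_inter_add_card_sdiff F X
  rw [Finset.inter_comm] at this
  omega

end SimpleGraph

theorem Finset.card_eq_sum_card_inter_of_partition {V ι : Type*} [DecidableEq V] [Fintype ι]
    {F : ι → Finset V} (hdisj : Pairwise fun i j => Disjoint (F i) (F j))
    (hcover : ∀ v, ∃ i, v ∈ F i) (s : Finset V) : s.card = ∑ i, (s ∩ F i).card := by
  have hs : s = Finset.univ.biUnion fun i => s ∩ F i := by
    ext x
    simp only [Finset.mem_biUnion, Finset.mem_univ, true_and, Finset.mem_inter]
    exact ⟨fun hx => (hcover x).imp fun _ hi => ⟨hx, hi⟩,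
      fun ⟨_, hx, _⟩ => hx⟩
  conv_lhs => rw [hs]
  exact Finset.card_biUnion fun i _ j _ hij =>
    (hdisj hij).mono Finset.inter_subset_right Finset.inter_subset_right

theorem partition_implies_unmixed_general {n : ℕ} (G : SimpleGraph (Fin n))
    {m : ℕ} (F : Fin m → Finset (Fin n))
    (hFfree : ∀ i, G.IsFreeFacet (F i))
    (hdisj : ∀ i j, i ≠ j → Disjoint (F i) (F j))
    (hcover : ∀ v : Fin n, ∃ i, v ∈ F i) :
    (∀ X : Finset (Fin n), G.IsMinVertexCover X →
      (∀ i, (X ∩ F i).card = (F i).card - 1) ∧ X.card = n - m) ∧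
    G.Unmixed := by
  have hcard (s : Finset (Fin n)) : s.card = ∑ i, (s ∩ F i).card :=
    Finset.card_eq_sum_card_inter_of_partition hdisj hcover s
  have hnonempty (i : Fin m) : 1 ≤ (F i).card :=
    (hFfree i).2.elim fun _ hv => Finset.card_pos.mpr ⟨_, hv.1⟩
  have hcovers (X : Finset (Fin n)) (hX : G.IsMinVertexCover X) :
      (∀ i, (X ∩ F i).card = (F i).card - 1) ∧ X.card = n - m := by
    have hinter (i : Fin m) := hX.card_inter_of_isFreeFacet (hFfree i)
    refine ⟨hinter, ?_⟩
    calc X.card = ∑ i, ((F i).card - 1) := by simp only [hcard X, hinter]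
      _ = ∑ i, (F i).card - m := by
        rw [Finset.sum_tsub_distrib _ fun i _ => hnonempty i]
        simp
      _ = n - m := by simpa using congrArg (· - m) (hcard Finset.univ).symm
  exact ⟨hcovers, fun C C' hC hC' => by rw [(hcovers C hC).2, (hcovers C' hC').2]⟩

/-- If `G` is a chordal graph on `[n]` and `[n]` is the disjoint union of
the facets `F_1,…,F_m` of `Δ(G)` admitting a free vertex, then every minimal vertex cover
`X` of `G` satisfies `|X ∩ F_i| = |F_i| - 1` for all `i`, hence has cardinality `n - m`;
in particular `G` is unmixed. -/
theorem partition_implies_unmixed {n : ℕ} (G : SimpleGraph (Fin n))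
    (hchordal : G.IsChordal) (hiso : ∀ v : Fin n, ∃ w, G.Adj v w)
    {m : ℕ} (F : Fin m → Finset (Fin n))
    (hFfree : ∀ i, G.IsFreeFacet (F i)) (hFinj : Function.Injective F)
    (hFall : ∀ F' : Finset (Fin n), G.IsFreeFacet F' → ∃ i, F' = F i)
    (hdisj : ∀ i j, i ≠ j → Disjoint (F i) (F j))
    (hcover : ∀ v : Fin n, ∃ i, v ∈ F i) :
    (∀ X : Finset (Fin n), G.IsMinVertexCover X →
      (∀ i, (X ∩ F i).card = (F i).card - 1) ∧ X.card = n - m) ∧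
    G.Unmixed :=
  partition_implies_unmixed_general G F hFfree hdisj hcover
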